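/- arXiv:2005.07736 — 3 statements merged into one kernel-verified Lean document; each statement's English description precedes it below -/
import Mathlib

section
/- Let d = k = 5. The orbit of the row vector δ₄ = (0,0,0,1) ∈ (ℤ/5ℤ)⁴ under right multiplication by the subgroup H₅(5,5) of GL(4, ℤ/5ℤ) generated by the reductions modulo 5 of M₀(5,5) and M₁ is exactly the set {(0,0,a,1) : a ∈ ℤ/5ℤ} of 5 vectors. -/
/-- The monodromy matrix `M₀(d,k)` around `0` of the Picard–Fuchs equation of certain
mirror Calabi–Yau threefolds. -/
def M0 (d k : ℤ) : Matrix (Fin 4) (Fin 4) ℤ :=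
  !![1, 1, 0, 0; 0, 1, 0, 0; d, d, 1, 0; 0, -k, -1, 1]

/-- The monodromy matrix `M₁` around `1`. -/
def M1 : Matrix (Fin 4) (Fin 4) ℤ :=
  !![1, 0, 0, 0; 0, 1, 0, 1; 0, 0, 1, 0; 0, 0, 0, 1]

lemma M0_det (d k : ℤ) : (M0 d k).det = 1 := by
  simp [M0, Matrix.det_succ_row_zero, Fin.sum_univ_succ, Fin.succAbove]

lemma M1_det : M1.det = 1 := by
  simp [M1, Matrix.det_succ_row_zero, Fin.sum_univ_succ, Fin.succAbove]

/-- The reduction modulo `p` of `M₀(d,k)`, as an element of `GL (Fin 4) (ZMod p)`. -/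
noncomputable def M0p (p : ℕ) (d k : ℤ) : GL (Fin 4) (ZMod p) :=
  Matrix.nonsingInvUnit ((M0 d k).map (Int.castRingHom (ZMod p)))
    (by rw [← RingHom.mapMatrix_apply, ← RingHom.map_det, M0_det]; simp)

/-- The reduction modulo `p` of `M₁`, as an element of `GL (Fin 4) (ZMod p)`. -/
noncomputable def M1p (p : ℕ) : GL (Fin 4) (ZMod p) :=
  Matrix.nonsingInvUnit (M1.map (Int.castRingHom (ZMod p)))
    (by rw [← RingHom.mapMatrix_apply, ← RingHom.map_det, M1_det]; simp)


/-!
When `p` divides `d` and `k`, the vectors `(0,0,a,1)` form an affine line in `(ℤ/pℤ)⁴` which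
`M₀(d,k)` translates by `a ↦ a - 1` and `M₁` fixes pointwise. Hence the whole group `H_p(d,k)`
stabilizes that line, and already the powers of `M₀(d,k)` act transitively on it.
-/

open Matrix

section RowStabilizer

variable {n R : Type*} [Fintype n] [DecidableEq n] [CommRing R]

lemma vecMul_inv_eq_of_vecMul_eq {g : GL n R} {v w : n → R} (h : v ᵥ* (g : Matrix n n R) = w) :
    w ᵥ* ((g⁻¹ : GL n R) : Matrix n n R) = v := by
  rw [← h, vecMul_vecMul, ← Units.val_mul, mul_inv_cancel, Units.val_one, vecMul_one]

def rowStabilizer (S : Set (n → R)) : Subgroup (GL n R) where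
  carrier := {g | ∀ v, v ᵥ* (g : Matrix n n R) ∈ S ↔ v ∈ S}
  one_mem' := by simp
  mul_mem' {g h} hg hh v := by
    rw [Units.val_mul, ← vecMul_vecMul, hh, hg]
  inv_mem' {g} hg v := by
    rw [← hg, vecMul_vecMul, ← Units.val_mul, inv_mul_cancel, Units.val_one, vecMul_one]

lemma mem_rowStabilizer_of_mapsTo {S : Set (n → R)} {g : GL n R}
    (h : ∀ v ∈ S, v ᵥ* (g : Matrix n n R) ∈ S)
    (h_inv : ∀ v ∈ S, v ᵥ* ((g⁻¹ : GL n R) : Matrix n n R) ∈ S) :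
    g ∈ rowStabilizer S := fun v =>
  ⟨fun hv => by simpa [vecMul_vecMul] using h_inv _ hv, h v⟩

end RowStabilizer

section Line

variable {R : Type*} [CommRing R]

lemma line_vecMul_zpow_of_line_vecMul {g : GL (Fin 4) R} {t : R}
    (h : ∀ a : R, ![0, 0, a, 1] ᵥ* (g : Matrix (Fin 4) (Fin 4) R) = ![0, 0, a + t, 1])
    (m : ℤ) (a : R) :
    ![0, 0, a, 1] ᵥ* ((g ^ m : GL (Fin 4) R) : Matrix (Fin 4) (Fin 4) R) = ![0, 0, a + m * t, 1] := by
  induction m using Int.induction_on with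
  | zero => simp
  | succ m ih =>
    rw [_root_.zpow_add_one, Units.val_mul, ← vecMul_vecMul, ih, h]
    push_cast
    ring_nf
  | pred m ih =>
    rw [_root_.zpow_sub_one, Units.val_mul, ← vecMul_vecMul, ih]
    refine vecMul_inv_eq_of_vecMul_eq ?_
    rw [h]
    push_cast
    ring_nf

lemma mem_rowStabilizer_of_line_vecMul {g : GL (Fin 4) R} {t : R}
    (h : ∀ a : R, ![0, 0, a, 1] ᵥ* (g : Matrix (Fin 4) (Fin 4) R) = ![0, 0, a + t, 1]) :
    g ∈ rowStabilizer {v | ∃ a : R, v = ![0, 0, a, 1]} := by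
  refine mem_rowStabilizer_of_mapsTo ?_ ?_
  · rintro _ ⟨a, rfl⟩
    exact ⟨a + t, h a⟩
  · rintro _ ⟨a, rfl⟩
    refine ⟨a - t, vecMul_inv_eq_of_vecMul_eq ?_⟩
    rw [h, sub_add_cancel]

end Line

section Monodromy

variable {p : ℕ} {d k : ℤ}

lemma coe_M0p : (M0p p d k : Matrix (Fin 4) (Fin 4) (ZMod p)) = (M0 d k).map (↑) := rfl

lemma coe_M1p : (M1p p : Matrix (Fin 4) (Fin 4) (ZMod p)) = M1.map (↑) := rfl

lemma line_vecMul_M0p (hd : (d : ZMod p) = 0) (hk : (k : ZMod p) = 0) (a : ZMod p) :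
    ![0, 0, a, 1] ᵥ* (M0p p d k : Matrix (Fin 4) (Fin 4) (ZMod p)) = ![0, 0, a - 1, 1] := by
  ext i
  fin_cases i <;> simp [coe_M0p, M0, vecMul, dotProduct, Fin.sum_univ_four, hd, hk, sub_eq_add_neg]

lemma line_vecMul_M1p (a : ZMod p) :
    ![0, 0, a, 1] ᵥ* (M1p p : Matrix (Fin 4) (Fin 4) (ZMod p)) = ![0, 0, a, 1] := by
  ext i
  fin_cases i <;> simp [coe_M1p, M1, vecMul, dotProduct, Fin.sum_univ_four]

theorem orbit_delta4_of_cast_eq_zero (hd : (d : ZMod p) = 0) (hk : (k : ZMod p) = 0) :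
    {w : Fin 4 → ZMod p |
      ∃ g ∈ Subgroup.closure {M0p p d k, M1p p},
        w = ![0, 0, 0, 1] ᵥ* (g : Matrix (Fin 4) (Fin 4) (ZMod p))} =
    {w : Fin 4 → ZMod p | ∃ a : ZMod p, w = ![0, 0, a, 1]} := by
  have hM0 (a : ZMod p) : ![0, 0, a, 1] ᵥ* (M0p p d k : Matrix (Fin 4) (Fin 4) (ZMod p)) =
      ![0, 0, a + -1, 1] := by
    rw [← sub_eq_add_neg, line_vecMul_M0p hd hk]
  have h_le : Subgroup.closure {M0p p d k, M1p p} ≤ rowStabilizer {v | ∃ a, v = ![0, 0, a, 1]} := by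
    rw [Subgroup.closure_le]
    rintro _ (rfl | rfl)
    · exact mem_rowStabilizer_of_line_vecMul hM0
    · exact mem_rowStabilizer_of_line_vecMul (t := 0) fun a => by
        rw [add_zero, line_vecMul_M1p]
  ext w
  constructor
  · rintro ⟨g, hg, rfl⟩
    exact (h_le hg _).2 ⟨0, rfl⟩
  · rintro ⟨a, rfl⟩
    obtain ⟨m, hm⟩ := ZMod.intCast_surjective (-a)
    refine ⟨M0p p d k ^ m, zpow_mem (Subgroup.subset_closure (by simp)) m, ?_⟩
    rw [line_vecMul_zpow_of_line_vecMul hM0, hm]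
    ring_nf

end Monodromy

theorem orbit5_delta4_55 :
    {w : Fin 4 → ZMod 5 |
      ∃ g ∈ Subgroup.closure {M0p 5 5 5, M1p 5},
        w = Matrix.vecMul ![0,0,0,1] (g : Matrix (Fin 4) (Fin 4) (ZMod 5))} =
    {w : Fin 4 → ZMod 5 | ∃ a : ZMod 5, w = ![0, 0, a, 1]} :=
  orbit_delta4_of_cast_eq_zero (by decide) (by decide)
end

section
/- Let d = k = 5. For every prime p in {3, 7, 11, 13, 17, 19, 23}, the orbit of the row vector δ₂ = (0,1,0,0) ∈ (ℤ/pℤ)⁴ under right multiplication by the subgroup H_p(5,5) of GL(4, ℤ/pℤ) generated by the reductions modulo p of M₀(5,5) and M₁ is exactly the set of all nonzero vectors of (ℤ/pℤ)⁴. -/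
/-!
Every element of `H = ⟨M₀, M₁⟩` preserves the symplectic form
`ω(x, y) = x₀y₂ - x₂y₀ + x₁y₃ - x₃y₁`, and `M₁` is the transvection `x ↦ x + ω(x, δ₄) δ₄`.
Conjugating powers of `M₁` by `h ∈ H` gives every transvection `x ↦ x + c ω(x, v) v` along
`v = δ₄ h`, so the orbit `O` of `δ₄` is closed under the transvections along its own vectors.
For such a set, two vectors `u, v ∈ O` with `ω(u, v) ≠ 0` put every nonzero vector of their plane
into `O`; moving inside the plane `⟨δ₂, δ₄⟩` and inside its orthogonal complement then fills all of
`(ℤ/p)⁴ \ {0}`, provided `O` contains `δ₂` and two vectors whose components orthogonal to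
`⟨δ₂, δ₄⟩` pair nontrivially. Explicit vectors of this kind are obtained from `δ₄ M₀^{±1}` and
`δ₄ M₀^{±2}` as soon as `p ≠ 2, 5`. Finally `δ₂ ∈ O` gives `orbit(δ₂) = O`.
-/

open LinearMap (BilinForm)

namespace LinearMap.BilinForm

variable {K V : Type*} [Field K] [AddCommGroup V] [Module K V] {ω : BilinForm K V} {O : Set V}

def TransvectionClosed (ω : BilinForm K V) (O : Set V) : Prop :=
  ∀ u ∈ O, ∀ v ∈ O, ∀ c : K, u + (c * ω u v) • v ∈ O

namespace TransvectionClosed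

theorem add_smul_mem (hO : ω.TransvectionClosed O) {u v : V} (hu : u ∈ O) (hv : v ∈ O)
    (huv : ω u v ≠ 0) (t : K) : u + t • v ∈ O := by
  simpa [div_mul_cancel₀ _ huv] using hO u hu v hv (t / ω u v)

theorem smul_mem (hO : ω.TransvectionClosed O) (hω : ω.IsAlt) {u v : V} (hu : u ∈ O)
    (hv : v ∈ O) (huv : ω u v ≠ 0) {l : K} (hl : l ≠ 0) : l • u ∈ O := by
  have h₁ : u + v ∈ O := by simpa using hO.add_smul_mem hu hv huv 1
  have h₂ : (l + 1) • u + v ∈ O := by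
    have huvu : ω (u + v) u ≠ 0 := by
      simpa [hω.self_eq_zero, ← hω.neg_eq u v] using huv
    convert hO.add_smul_mem h₁ hu huvu l using 1
    module
  have h₃ : ω ((l + 1) • u + v) (u + v) = l * ω u v := by
    simp [hω.self_eq_zero, ← hω.neg_eq u v]
    ring
  convert hO.add_smul_mem h₂ h₁ (h₃ ▸ mul_ne_zero hl huv) (-1) using 1
  module

theorem smul_add_smul_mem (hO : ω.TransvectionClosed O) (hω : ω.IsAlt) {u v : V} (hu : u ∈ O)
    (hv : v ∈ O) (huv : ω u v ≠ 0) {a b : K} (hab : (a, b) ≠ 0) : a • u + b • v ∈ O := by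
  by_cases ha : a = 0
  · have hb : b ≠ 0 := fun hb => hab (by simp [ha, hb])
    have hvu : ω v u ≠ 0 := by rwa [← hω.neg_eq, neg_ne_zero]
    simpa [ha] using hO.smul_mem hω hv hu hvu hb
  · refine hO.add_smul_mem (hO.smul_mem hω hu hv huv ha) hv ?_ b
    simpa using mul_ne_zero ha huv

theorem smul_add_smul_add_mem_of_det_ne_zero (hO : ω.TransvectionClosed O) (hω : ω.IsAlt)
    {e f y : V} (he : e ∈ O) (hf : f ∈ O) (hef : ω e f ≠ 0) (hey : ω e y = 0)
    (hfy : ω f y = 0) {a b a' b' : K} (hdet : a * b' - b * a' ≠ 0)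
    (h : a • e + b • f + y ∈ O) : a' • e + b' • f + y ∈ O := by
  have hd : (a' - a, b' - b) ≠ 0 := by
    intro h0
    simp only [Prod.mk_eq_zero, sub_eq_zero] at h0
    exact hdet (by rw [h0.1, h0.2]; ring)
  have hω' : ω (a • e + b • f + y) ((a' - a) • e + (b' - b) • f) =
      (a * b' - b * a') * ω e f := by
    simp [hω.self_eq_zero, ← hω.neg_eq e f, ← hω.neg_eq e y, ← hω.neg_eq f y, hey, hfy]
    ring
  convert hO.add_smul_mem h (hO.smul_add_smul_mem hω he hf hef hd)
    (hω' ▸ mul_ne_zero hdet hef) 1 using 1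
  module

theorem smul_add_smul_add_mem (hO : ω.TransvectionClosed O) (hω : ω.IsAlt) {e f y : V}
    (he : e ∈ O) (hf : f ∈ O) (hef : ω e f ≠ 0) (hey : ω e y = 0) (hfy : ω f y = 0)
    {a b a' b' : K} (hab : (a, b) ≠ 0) (hab' : (a', b') ≠ 0) (h : a • e + b • f + y ∈ O) :
    a' • e + b' • f + y ∈ O := by
  have move : ∀ {a b a' b' : K}, a * b' - b * a' ≠ 0 →
      a • e + b • f + y ∈ O → a' • e + b' • f + y ∈ O :=
    hO.smul_add_smul_add_mem_of_det_ne_zero hω he hf hef hey hfy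
  simp only [ne_eq, Prod.mk_eq_zero, not_and_or] at hab hab'
  by_cases hdet : a * b' - b * a' = 0
  · -- `(a, b)` and `(a', b')` are proportional: pass through a coordinate vector
    rcases eq_or_ne a 0 with rfl | ha
    · have hb : b ≠ 0 := by tauto
      obtain rfl : a' = 0 := by simpa [hb] using hdet
      have hb' : b' ≠ 0 := by tauto
      exact move (by simpa using hb') (move (a' := 1) (b' := 0) (by simpa using hb) h)
    · have ha' : a' ≠ 0 := by
        rintro rfl
        have : b' = 0 := by simpa [ha] using hdet
        tauto
      exact move (by simpa using ha') (move (a' := 0) (b' := 1) (by simpa using ha) h)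
  · exact move hdet h

theorem smul_add_smul_mem_of_mixed (hO : ω.TransvectionClosed O) (hω : ω.IsAlt)
    (h2 : (2 : K) ≠ 0) {e f y₁ y₂ : V} (he : e ∈ O) (hf : f ∈ O) (hef : ω e f ≠ 0)
    (hey₁ : ω e y₁ = 0) (hfy₁ : ω f y₁ = 0) (hey₂ : ω e y₂ = 0) (hfy₂ : ω f y₂ = 0)
    (hy : ω y₁ y₂ ≠ 0) {a₁ b₁ a₂ b₂ : K} (hab₁ : (a₁, b₁) ≠ 0) (hab₂ : (a₂, b₂) ≠ 0)
    (hm₁ : a₁ • e + b₁ • f + y₁ ∈ O) (hm₂ : a₂ • e + b₂ • f + y₂ ∈ O) {s t : K}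
    (hst : (s, t) ≠ 0) : s • y₁ + t • y₂ ∈ O := by
  have hm₁' : (1 : K) • e + (0 : K) • f + y₁ ∈ O :=
    hO.smul_add_smul_add_mem hω he hf hef hey₁ hfy₁ hab₁ (by simp) hm₁
  -- the `e`-components of `e + y₁` and `-c⁻¹ e + y₂` cancel in `(e + y₁) + c (-c⁻¹ e + y₂)`
  have hline : ∀ c : K, c ≠ 0 → y₁ + c • y₂ ∈ O := by
    intro c hc
    have hm₂' : (-c⁻¹) • e + (0 : K) • f + y₂ ∈ O :=
      hO.smul_add_smul_add_mem hω he hf hef hey₂ hfy₂ hab₂ (by simpa using hc) hm₂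
    have hω' : ω ((1 : K) • e + (0 : K) • f + y₁) ((-c⁻¹) • e + (0 : K) • f + y₂) =
        ω y₁ y₂ := by
      simp [hω.self_eq_zero, ← hω.neg_eq e y₁, hey₁, hey₂]
    convert hO.add_smul_mem hm₁' hm₂' (hω' ▸ hy) c using 1
    rw [smul_add, smul_add, smul_smul, mul_neg, mul_inv_cancel₀ hc]
    module
  have hω' : ω (y₁ + (1 : K) • y₂) (y₁ + (2 : K) • y₂) = ω y₁ y₂ := by
    simp [hω.self_eq_zero, ← hω.neg_eq y₁ y₂]
    ring
  have hcoef : (2 * s - t, t - s) ≠ 0 := by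
    contrapose! hst
    simp only [Prod.mk_eq_zero, sub_eq_zero] at hst ⊢
    exact ⟨by linear_combination hst.1 + hst.2, by linear_combination hst.1 + 2 * hst.2⟩
  convert hO.smul_add_smul_mem hω (hline 1 one_ne_zero) (hline 2 h2) (hω' ▸ hy) hcoef using 1
  module

theorem smul_add_smul_add_mem_of_mixed (hO : ω.TransvectionClosed O) (hω : ω.IsAlt)
    (h2 : (2 : K) ≠ 0) {e f y₁ y₂ : V} (he : e ∈ O) (hf : f ∈ O) (hef : ω e f ≠ 0)
    (hey₁ : ω e y₁ = 0) (hfy₁ : ω f y₁ = 0) (hey₂ : ω e y₂ = 0) (hfy₂ : ω f y₂ = 0)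
    (hy : ω y₁ y₂ ≠ 0) {a₁ b₁ a₂ b₂ : K} (hab₁ : (a₁, b₁) ≠ 0) (hab₂ : (a₂, b₂) ≠ 0)
    (hm₁ : a₁ • e + b₁ • f + y₁ ∈ O) (hm₂ : a₂ • e + b₂ • f + y₂ ∈ O) {a b s t : K}
    (habst : (a, b, s, t) ≠ 0) : a • e + b • f + (s • y₁ + t • y₂) ∈ O := by
  have hQ : ∀ {s t : K}, (s, t) ≠ 0 → s • y₁ + t • y₂ ∈ O :=
    hO.smul_add_smul_mem_of_mixed hω h2 he hf hef hey₁ hfy₁ hey₂ hfy₂ hy hab₁ hab₂ hm₁ hm₂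
  by_cases hst : (s, t) = 0
  · obtain ⟨rfl, rfl⟩ := Prod.mk_eq_zero.mp hst
    have hab : (a, b) ≠ 0 := by simpa using habst
    simpa using hO.smul_add_smul_mem hω he hf hef hab
  by_cases hab : (a, b) = 0
  · obtain ⟨rfl, rfl⟩ := Prod.mk_eq_zero.mp hab
    simpa using hQ hst
  have hy₁ : y₁ ∈ O := by simpa using hQ (s := 1) (t := 0) (by simp)
  have hy₂ : y₂ ∈ O := by simpa using hQ (s := 0) (t := 1) (by simp)
  have hy₁e : ω y₁ e = 0 := by rw [← hω.neg_eq, hey₁, neg_zero]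
  have hy₂e : ω y₂ e = 0 := by rw [← hω.neg_eq, hey₂, neg_zero]
  have hm₁' : (1 : K) • y₁ + (0 : K) • y₂ + e ∈ O := by
    simpa [add_comm] using
      hO.smul_add_smul_add_mem hω he hf hef hey₁ hfy₁ hab₁ (a' := 1) (b' := 0) (by simp) hm₁
  have hm : (1 : K) • e + (0 : K) • f + (s • y₁ + t • y₂) ∈ O := by
    simpa [add_comm] using hO.smul_add_smul_add_mem hω hy₁ hy₂ hy hy₁e hy₂e (by simp) hst hm₁'
  exact hO.smul_add_smul_add_mem hω he hf hef (by simp [hey₁, hey₂]) (by simp [hfy₁, hfy₂])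
    (by simp) hab hm

end TransvectionClosed

end LinearMap.BilinForm

open Matrix

section RowOrbit

variable {n K : Type*} [Fintype n] [DecidableEq n] [CommRing K]

def rowOrbit (H : Subgroup (GL n K)) (v : n → K) : Set (n → K) :=
  {w | ∃ g ∈ H, w = vecMul v (g : Matrix n n K)}

variable {H : Subgroup (GL n K)} {v w : n → K} {g : GL n K}

theorem mem_rowOrbit_self : v ∈ rowOrbit H v := ⟨1, H.one_mem, by simp⟩

theorem vecMul_mem_rowOrbit (hw : w ∈ rowOrbit H v) (hg : g ∈ H) :
    vecMul w (g : Matrix n n K) ∈ rowOrbit H v := by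
  obtain ⟨h, hh, rfl⟩ := hw
  exact ⟨h * g, H.mul_mem hh hg, by simp [vecMul_vecMul]⟩

theorem mem_rowOrbit_of_vecMul_mem (hw : vecMul w (g : Matrix n n K) ∈ rowOrbit H v)
    (hg : g ∈ H) : w ∈ rowOrbit H v := by
  simpa [vecMul_vecMul, ← Units.val_mul] using vecMul_mem_rowOrbit hw (H.inv_mem hg)

theorem rowOrbit_eq_of_mem (hw : w ∈ rowOrbit H v) : rowOrbit H w = rowOrbit H v := by
  obtain ⟨h, hh, rfl⟩ := hw
  ext u
  constructor
  · rintro ⟨g, hg, rfl⟩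
    exact ⟨h * g, H.mul_mem hh hg, by simp [vecMul_vecMul]⟩
  · rintro ⟨g, hg, rfl⟩
    exact ⟨h⁻¹ * g, H.mul_mem (H.inv_mem hh) hg, by simp [vecMul_vecMul, ← Matrix.mul_assoc]⟩

theorem zero_notMem_rowOrbit (hv : v ≠ 0) : (0 : n → K) ∉ rowOrbit H v := by
  rintro ⟨g, -, hg⟩
  apply hv
  simpa [vecMul_vecMul, ← Units.val_mul] using
    congrArg (vecMul · ((g⁻¹ : GL n K) : Matrix n n K)) hg.symm

def vecMulIsometryGroup (ω : BilinForm K (n → K)) : Subgroup (GL n K) where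
  carrier := {g | ∀ x y, ω (vecMul x (g : Matrix n n K)) (vecMul y (g : Matrix n n K)) = ω x y}
  one_mem' := by simp
  mul_mem' := by
    intro a b ha hb x y
    rw [Units.val_mul, ← vecMul_vecMul, ← vecMul_vecMul, hb, ha]
  inv_mem' := by
    intro g hg x y
    rw [← hg]
    simp [vecMul_vecMul]

end RowOrbit

/-- `T ^ c.val` is the transvection along `e` with coefficient `c`, and conjugating it by `h`
moves its direction to `e h`. -/
theorem transvectionClosed_rowOrbit {p : ℕ} [Fact p.Prime] {n : Type*} [Fintype n]
    [DecidableEq n] {ω : BilinForm (ZMod p) (n → ZMod p)} (hω : ω.IsAlt)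
    {H : Subgroup (GL n (ZMod p))} (hH : H ≤ vecMulIsometryGroup ω) {e : n → ZMod p}
    {T : GL n (ZMod p)} (hT : T ∈ H)
    (hTe : ∀ z, vecMul z (T : Matrix n n (ZMod p)) = z + ω z e • e) :
    ω.TransvectionClosed (rowOrbit H e) := by
  have hpow : ∀ (m : ℕ) z, vecMul z ((T ^ m : GL n (ZMod p)) : Matrix n n (ZMod p)) =
      z + ((m : ZMod p) * ω z e) • e := by
    intro m
    induction m with
    | zero => simp
    | succ m ih =>
      intro z
      rw [pow_succ, Units.val_mul, ← vecMul_vecMul, ih, hTe]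
      simp [hω.self_eq_zero]
      module
  rintro u hu _ ⟨h, hh, rfl⟩ c
  have hinv : ω (vecMul u ((h⁻¹ : GL n (ZMod p)) : Matrix n n (ZMod p))) e =
      ω u (vecMul e (h : Matrix n n (ZMod p))) := by
    rw [← hH hh]
    simp [vecMul_vecMul]
  have hconj : vecMul u ((h⁻¹ * T ^ c.val * h : GL n (ZMod p)) : Matrix n n (ZMod p)) =
      u + (c * ω u (vecMul e (h : Matrix n n (ZMod p)))) • vecMul e (h : Matrix n n (ZMod p)) := by
    rw [Units.val_mul, Units.val_mul, ← vecMul_vecMul, ← vecMul_vecMul, hpow, add_vecMul,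
      smul_vecMul, hinv, ZMod.natCast_zmod_val]
    simp [vecMul_vecMul]
  rw [← hconj]
  exact vecMul_mem_rowOrbit hu (H.mul_mem (H.mul_mem (H.inv_mem hh) (H.pow_mem hT _)) hh)

def symplecticForm (K : Type*) [CommRing K] : BilinForm K (Fin 4 → K) :=
  Matrix.toLinearMap₂' K !![0, 0, 1, 0; 0, 0, 0, 1; -1, 0, 0, 0; 0, -1, 0, 0]

section SymplecticForm

variable {K : Type*} [CommRing K]

theorem symplecticForm_apply (x y : Fin 4 → K) :
    symplecticForm K x y = x 0 * y 2 - x 2 * y 0 + x 1 * y 3 - x 3 * y 1 := by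
  simp [symplecticForm, Matrix.toLinearMap₂'_apply', dotProduct, mulVec, Fin.sum_univ_four]
  ring

theorem symplecticForm_isAlt : (symplecticForm K).IsAlt := by
  intro x
  rw [symplecticForm_apply]
  ring

end SymplecticForm

def monodromyGroup (p : ℕ) (d k : ℤ) : Subgroup (GL (Fin 4) (ZMod p)) :=
  Subgroup.closure {M0p p d k, M1p p}

theorem M0p_mem_monodromyGroup (p : ℕ) (d k : ℤ) : M0p p d k ∈ monodromyGroup p d k :=
  Subgroup.subset_closure (by simp)

theorem M1p_mem_monodromyGroup (p : ℕ) (d k : ℤ) : M1p p ∈ monodromyGroup p d k :=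
  Subgroup.subset_closure (by simp)

theorem vecMul_M0p (p : ℕ) (d k : ℤ) (x : Fin 4 → ZMod p) :
    vecMul x (M0p p d k : Matrix (Fin 4) (Fin 4) (ZMod p)) =
      ![x 0 + d * x 2, x 0 + x 1 + d * x 2 - k * x 3, x 2 - x 3, x 3] := by
  change vecMul x ((M0 d k).map (Int.castRingHom (ZMod p))) = _
  ext i
  fin_cases i <;> simp [M0, vecMul, dotProduct, Fin.sum_univ_four] <;> ring

theorem vecMul_M1p (p : ℕ) (x : Fin 4 → ZMod p) :
    vecMul x (M1p p : Matrix (Fin 4) (Fin 4) (ZMod p)) = ![x 0, x 1, x 2, x 3 + x 1] := by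
  change vecMul x (M1.map (Int.castRingHom (ZMod p))) = _
  ext i
  fin_cases i <;> simp [M1, vecMul, dotProduct, Fin.sum_univ_four, add_comm]

theorem monodromyGroup_le_vecMulIsometryGroup (p : ℕ) (d k : ℤ) :
    monodromyGroup p d k ≤ vecMulIsometryGroup (symplecticForm (ZMod p)) := by
  rw [monodromyGroup, Subgroup.closure_le]
  rintro g (rfl | rfl) x y <;>
    simp only [vecMul_M0p, vecMul_M1p, symplecticForm_apply] <;> simp <;> ring

theorem transvectionClosed_rowOrbit_delta4 (p : ℕ) [Fact p.Prime] (d k : ℤ) :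
    (symplecticForm (ZMod p)).TransvectionClosed
      (rowOrbit (monodromyGroup p d k) ![0, 0, 0, 1]) := by
  refine transvectionClosed_rowOrbit symplecticForm_isAlt
    (monodromyGroup_le_vecMulIsometryGroup p d k) (M1p_mem_monodromyGroup p d k) fun z => ?_
  rw [vecMul_M1p, symplecticForm_apply]
  ext i
  fin_cases i <;> simp

section FiveFive

variable {p : ℕ} [Fact p.Prime]

/-- The last two vectors are `δ₄ (2 M₀ - M₀²)` and `δ₄ (2 M₀⁻¹ - M₀⁻²)`. -/
theorem mixed_mem_rowOrbit_delta4 (h5 : (5 : ZMod p) ≠ 0) :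
    ![0, -5, -1, 1] ∈ rowOrbit (monodromyGroup p 5 5) ![0, 0, 0, 1] ∧
      ![5, 5, 0, 1] ∈ rowOrbit (monodromyGroup p 5 5) ![0, 0, 0, 1] ∧
      ![5, -5, 0, 1] ∈ rowOrbit (monodromyGroup p 5 5) ![0, 0, 0, 1] := by
  have hO := transvectionClosed_rowOrbit_delta4 p 5 5
  have hω := symplecticForm_isAlt (K := ZMod p)
  have hM0 := M0p_mem_monodromyGroup p 5 5
  have ha : ![0, -5, -1, 1] ∈ rowOrbit (monodromyGroup p 5 5) ![0, 0, 0, 1] := by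
    convert vecMul_mem_rowOrbit mem_rowOrbit_self hM0 using 1
    ext i; fin_cases i <;> simp [vecMul_M0p]
  have hb : ![-5, -15, -2, 1] ∈ rowOrbit (monodromyGroup p 5 5) ![0, 0, 0, 1] := by
    convert vecMul_mem_rowOrbit ha hM0 using 1
    ext i; fin_cases i <;> simp [vecMul_M0p] <;> norm_num
  have hc : ![-5, 5, 1, 1] ∈ rowOrbit (monodromyGroup p 5 5) ![0, 0, 0, 1] := by
    refine mem_rowOrbit_of_vecMul_mem ?_ hM0
    convert mem_rowOrbit_self (H := monodromyGroup p 5 5) using 1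
    ext i; fin_cases i <;> simp [vecMul_M0p]
  have hd : ![-15, 15, 2, 1] ∈ rowOrbit (monodromyGroup p 5 5) ![0, 0, 0, 1] := by
    refine mem_rowOrbit_of_vecMul_mem ?_ hM0
    convert hc using 1
    ext i; fin_cases i <;> simp [vecMul_M0p] <;> norm_num
  refine ⟨ha, ?_, ?_⟩
  · convert hO.smul_add_smul_mem hω ha hb (a := 2) (b := -1) ?_ (by simp) using 1
    · ext i; fin_cases i <;> simp <;> norm_num
    · simp [symplecticForm_apply]; norm_num; exact h5
  · convert hO.smul_add_smul_mem hω hc hd (a := 2) (b := -1) ?_ (by simp) using 1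
    · ext i; fin_cases i <;> simp <;> norm_num
    · simp [symplecticForm_apply]; norm_num; exact h5

theorem delta2_mem_rowOrbit_delta4 (h2 : (2 : ZMod p) ≠ 0) (h5 : (5 : ZMod p) ≠ 0) :
    ![0, 1, 0, 0] ∈ rowOrbit (monodromyGroup p 5 5) ![0, 0, 0, 1] := by
  obtain ⟨-, hplus, hminus⟩ := mixed_mem_rowOrbit_delta4 h5
  have h10 : (10 : ZMod p) ≠ 0 := by
    rw [show (10 : ZMod p) = 2 * 5 by norm_num]
    exact mul_ne_zero h2 h5
  convert (transvectionClosed_rowOrbit_delta4 p 5 5).smul_add_smul_mem symplecticForm_isAlt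
    hplus hminus (a := 10⁻¹) (b := -10⁻¹) ?_ (by simpa using h10) using 1
  · ext i; fin_cases i <;> simp
    linear_combination (inv_mul_cancel₀ h10).symm
  · simp [symplecticForm_apply]; norm_num; exact h10

/-- `![5, 0, 0, 0]` and `![0, 0, -1, 0]` are the components of `![5, 5, 0, 1]` and
`![0, -5, -1, 1]` orthogonal to the plane spanned by `δ₂` and `δ₄`. -/
theorem mem_rowOrbit_delta4 (h2 : (2 : ZMod p) ≠ 0) (h5 : (5 : ZMod p) ≠ 0)
    {w : Fin 4 → ZMod p} (hw : w ≠ 0) :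
    w ∈ rowOrbit (monodromyGroup p 5 5) ![0, 0, 0, 1] := by
  obtain ⟨ha, hplus, -⟩ := mixed_mem_rowOrbit_delta4 h5
  have habst : (w 1, w 3, w 0 / 5, -w 2) ≠ 0 := by
    contrapose! hw
    simp only [Prod.mk_eq_zero, neg_eq_zero, div_eq_zero_iff, h5, or_false] at hw
    ext i; fin_cases i <;> simp [hw]
  convert (transvectionClosed_rowOrbit_delta4 p 5 5).smul_add_smul_add_mem_of_mixed
    symplecticForm_isAlt h2 (delta2_mem_rowOrbit_delta4 h2 h5) mem_rowOrbit_self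
    (y₁ := ![5, 0, 0, 0]) (y₂ := ![0, 0, -1, 0]) (a₁ := 5) (b₁ := 1) (a₂ := -5) (b₂ := 1)
    (by simp [symplecticForm_apply]) (by simp [symplecticForm_apply])
    (by simp [symplecticForm_apply]) (by simp [symplecticForm_apply])
    (by simp [symplecticForm_apply]) (by simp [symplecticForm_apply]; exact h5)
    (by simp) (by simp) ?_ ?_ habst using 1
  · ext i; fin_cases i <;> simp; field_simp
  · convert hplus using 1; ext i; fin_cases i <;> simp
  · convert ha using 1; ext i; fin_cases i <;> simp

theorem rowOrbit_delta2_eq (hp2 : p ≠ 2) (hp5 : p ≠ 5) :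
    rowOrbit (monodromyGroup p 5 5) ![0, 1, 0, 0] = {w | w ≠ 0} := by
  have hne : ∀ q : ℕ, q.Prime → p ≠ q → (q : ZMod p) ≠ 0 := fun q hq hpq h0 =>
    hpq <| (Nat.prime_dvd_prime_iff_eq Fact.out hq).mp ((ZMod.natCast_eq_zero_iff q p).mp h0)
  have h2 : (2 : ZMod p) ≠ 0 := by exact_mod_cast hne 2 Nat.prime_two hp2
  have h5 : (5 : ZMod p) ≠ 0 := by exact_mod_cast hne 5 Nat.prime_five hp5
  rw [rowOrbit_eq_of_mem (delta2_mem_rowOrbit_delta4 h2 h5)]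
  ext w
  refine ⟨fun hw h0 => zero_notMem_rowOrbit (by simp) (h0 ▸ hw), mem_rowOrbit_delta4 h2 h5⟩

end FiveFive

theorem orbitp_delta2_55_complete (p : ℕ) (hp : p.Prime)
    (hmem : p ∈ ({3, 7, 11, 13, 17, 19, 23} : Finset ℕ)) :
    {w : Fin 4 → ZMod p |
      ∃ g ∈ Subgroup.closure {M0p p 5 5, M1p p},
        w = Matrix.vecMul ![0,1,0,0] (g : Matrix (Fin 4) (Fin 4) (ZMod p))} =
    {w : Fin 4 → ZMod p | w ≠ 0} := by
  have : Fact p.Prime := ⟨hp⟩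
  simp only [Finset.mem_insert, Finset.mem_singleton] at hmem
  exact rowOrbit_delta2_eq (by omega) (by omega)
end

section
/- Let d = 12 and k = 7. The orbit of the row vector δ₄ = (0,0,0,1) ∈ (ℤ/3ℤ)⁴ under right multiplication by the subgroup H₃(12,7) of GL(4, ℤ/3ℤ) generated by the reductions modulo 3 of M₀(12,7) and M₁ is exactly the set {(0,0,0,1), (0,0,0,2), (0,1,1,0), (0,1,1,1), (0,1,1,2), (0,2,2,0), (0,2,2,1), (0,2,2,2)}. -/
/-! The eight listed vectors form a finite set `S ∋ δ₄` that right multiplication by each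
generator maps into itself. Right multiplication by an invertible matrix is injective, so on the
finite set `S` it is a bijection, and `S` is stable under the inverses of the generators as well,
hence under all of `H₃(12,7)`. Conversely, every vector of `S` is reached from `δ₄` by a short
word in the generators. -/

open Matrix Set

section

variable {n R : Type*} [Fintype n] [DecidableEq n] [Semiring R]

def vecMulOrbit (s : Set (GL n R)) (v : n → R) : Set (n → R) :=
  {w | ∃ g ∈ Subgroup.closure s, w = v ᵥ* (g : Matrix n n R)}

theorem Set.MapsTo.vecMul_inv {S : Set (n → R)} (hS : S.Finite) {g : GL n R}
    (hg : MapsTo (· ᵥ* (g : Matrix n n R)) S S) :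
    MapsTo (· ᵥ* ((g⁻¹ : GL n R) : Matrix n n R)) S S := by
  have hinj : InjOn (· ᵥ* (g : Matrix n n R)) S := fun a _ b _ hab => by
    simpa [vecMul_vecMul] using congrArg (· ᵥ* ((g⁻¹ : GL n R) : Matrix n n R)) hab
  intro v hv
  obtain ⟨w, hw, rfl⟩ := ((hS.injOn_iff_bijOn_of_mapsTo hg).mp hinj).surjOn hv
  simpa [vecMul_vecMul] using hw

theorem mapsTo_vecMul_of_mem_closure {s : Set (GL n R)} {S : Set (n → R)} (hS : S.Finite)
    (hs : ∀ g ∈ s, MapsTo (· ᵥ* (g : Matrix n n R)) S S) {g : GL n R}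
    (hg : g ∈ Subgroup.closure s) : MapsTo (· ᵥ* (g : Matrix n n R)) S S := by
  induction hg using Subgroup.closure_induction with
  | mem g hg => exact hs g hg
  | one => exact fun v hv => by simpa using hv
  | mul g h _ _ hg hh => simpa [Function.comp_def, vecMul_vecMul] using hh.comp hg
  | inv g _ hg => exact hg.vecMul_inv hS

theorem vecMulOrbit_subset {s : Set (GL n R)} {S : Set (n → R)} (hS : S.Finite)
    (hs : ∀ g ∈ s, MapsTo (· ᵥ* (g : Matrix n n R)) S S) {v : n → R} (hv : v ∈ S) :
    vecMulOrbit s v ⊆ S := by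
  rintro _ ⟨g, hg, rfl⟩
  exact mapsTo_vecMul_of_mem_closure hS hs hg hv

theorem self_mem_vecMulOrbit (s : Set (GL n R)) (v : n → R) : v ∈ vecMulOrbit s v :=
  ⟨1, one_mem _, by simp⟩

theorem vecMul_mem_vecMulOrbit {s : Set (GL n R)} {v w w' : n → R} (hw : w ∈ vecMulOrbit s v)
    {g : GL n R} (hg : g ∈ s) (h : w ᵥ* (g : Matrix n n R) = w') : w' ∈ vecMulOrbit s v := by
  obtain ⟨g₀, hg₀, rfl⟩ := hw
  exact ⟨g₀ * g, mul_mem hg₀ (Subgroup.subset_closure hg), by simp [← h, vecMul_vecMul]⟩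

end

lemma coe_M0p_three_12_7 : (M0p 3 12 7 : Matrix (Fin 4) (Fin 4) (ZMod 3)) =
    !![1, 1, 0, 0; 0, 1, 0, 0; 0, 0, 1, 0; 0, 2, 2, 1] := by
  change (M0 12 7).map (Int.castRingHom (ZMod 3)) = _
  decide

lemma coe_M1p_three : (M1p 3 : Matrix (Fin 4) (Fin 4) (ZMod 3)) =
    !![1, 0, 0, 0; 0, 1, 0, 1; 0, 0, 1, 0; 0, 0, 0, 1] := by
  change M1.map (Int.castRingHom (ZMod 3)) = _
  decide

def delta4OrbitMod3 : Finset (Fin 4 → ZMod 3) :=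
  {![0,0,0,1], ![0,0,0,2], ![0,1,1,0], ![0,1,1,1], ![0,1,1,2], ![0,2,2,0], ![0,2,2,1], ![0,2,2,2]}

lemma coe_delta4OrbitMod3 :
    (delta4OrbitMod3 : Set (Fin 4 → ZMod 3)) =
      {![0,0,0,1], ![0,0,0,2], ![0,1,1,0], ![0,1,1,1],
        ![0,1,1,2], ![0,2,2,0], ![0,2,2,1], ![0,2,2,2]} := by
  simp [delta4OrbitMod3]

lemma mapsTo_M0p_three_12_7 : MapsTo (· ᵥ* (M0p 3 12 7 : Matrix (Fin 4) (Fin 4) (ZMod 3)))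
    delta4OrbitMod3 delta4OrbitMod3 := by
  rw [coe_M0p_three_12_7]
  decide

lemma mapsTo_M1p_three : MapsTo (· ᵥ* (M1p 3 : Matrix (Fin 4) (Fin 4) (ZMod 3)))
    delta4OrbitMod3 delta4OrbitMod3 := by
  rw [coe_M1p_three]
  decide

lemma vecMulOrbit_subset_delta4OrbitMod3 :
    vecMulOrbit {M0p 3 12 7, M1p 3} ![0,0,0,1] ⊆ delta4OrbitMod3 := by
  refine vecMulOrbit_subset delta4OrbitMod3.finite_toSet ?_ (by decide)
  rintro g (rfl | rfl)
  exacts [mapsTo_M0p_three_12_7, mapsTo_M1p_three]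

lemma delta4OrbitMod3_subset_vecMulOrbit :
    ↑delta4OrbitMod3 ⊆ vecMulOrbit {M0p 3 12 7, M1p 3} ![0,0,0,1] := by
  set O := vecMulOrbit {M0p 3 12 7, M1p 3} ![0,0,0,1]
  have viaM0 {w w' : Fin 4 → ZMod 3} (hw : w ∈ O)
      (h : w ᵥ* !![1, 1, 0, 0; 0, 1, 0, 0; 0, 0, 1, 0; 0, 2, 2, 1] = w') : w' ∈ O :=
    vecMul_mem_vecMulOrbit hw (g := M0p 3 12 7) (by simp) (by rwa [coe_M0p_three_12_7])
  have viaM1 {w w' : Fin 4 → ZMod 3} (hw : w ∈ O)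
      (h : w ᵥ* !![1, 0, 0, 0; 0, 1, 0, 1; 0, 0, 1, 0; 0, 0, 0, 1] = w') : w' ∈ O :=
    vecMul_mem_vecMulOrbit hw (g := M1p 3) (by simp) (by rwa [coe_M1p_three])
  have h0001 : ![0,0,0,1] ∈ O := self_mem_vecMulOrbit _ _
  have h0221 : ![0,2,2,1] ∈ O := viaM0 h0001 (by decide)
  have h0220 : ![0,2,2,0] ∈ O := viaM1 h0221 (by decide)
  have h0222 : ![0,2,2,2] ∈ O := viaM1 h0220 (by decide)
  have h0002 : ![0,0,0,2] ∈ O := viaM0 h0222 (by decide)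
  have h0111 : ![0,1,1,1] ∈ O := viaM0 h0221 (by decide)
  have h0112 : ![0,1,1,2] ∈ O := viaM1 h0111 (by decide)
  have h0110 : ![0,1,1,0] ∈ O := viaM1 h0112 (by decide)
  simp only [coe_delta4OrbitMod3, Set.insert_subset_iff, Set.singleton_subset_iff]
  exact ⟨h0001, h0002, h0110, h0111, h0112, h0220, h0221, h0222⟩

theorem orbit3_delta4_127 :
    {w : Fin 4 → ZMod 3 |
      ∃ g ∈ Subgroup.closure {M0p 3 12 7, M1p 3},
        w = Matrix.vecMul ![0,0,0,1] (g : Matrix (Fin 4) (Fin 4) (ZMod 3))} =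
    {![0,0,0,1], ![0,0,0,2], ![0,1,1,0], ![0,1,1,1], ![0,1,1,2], ![0,2,2,0], ![0,2,2,1], ![0,2,2,2]} := by
  rw [← coe_delta4OrbitMod3]
  exact vecMulOrbit_subset_delta4OrbitMod3.antisymm delta4OrbitMod3_subset_vecMulOrbit
end
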